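/- arXiv:1405.4176 — 4 statements merged into one kernel-verified Lean document; each statement's English description precedes it below -/
import Mathlib

section
/- For a, s > 0 and 0 < b ≤ 1, the function f_{a,b,s}(x) = (Γ(a+b)/(s·Γ(a)Γ(b))) (x+1)^{(1-a-b)/s - 1} ((x+1)^{1/s} - 1)^{b-1} is log-convex on (0, ∞). Conversely, if b > 1 then f_{a,b,s} is not log-convex on (0, ∞). -/
/-!
Write `y = x + 1`. Since `y ^ (1/s) - 1 = y ^ (1/s) * (1 - y ^ (-1/s))`, the logarithm of
`fBeta a b s x` equals `log C - (a/s + 1) log y + (b - 1) log (1 - y ^ (-1/s))`, with `C` the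
normalising constant. For `b ≤ 1` every summand is convex in `y > 1`: `-log (1 - t)` is convex
and increasing, and `y ^ (-1/s)` is convex. For `b > 1` the last summand, hence the whole
expression, tends to `-∞` as `y → 1⁺`; a convex function on `(1, ∞)` cannot do that, because
the monotonicity of its slopes bounds it below near `1`.
-/

open Real

noncomputable def fBeta (a b s x : ℝ) : ℝ :=
  (Gamma (a + b) / (s * Gamma a * Gamma b)) * (x + 1) ^ ((1 - a - b) / s - 1)
    * ((x + 1) ^ (1 / s) - 1) ^ (b - 1)

open Set Filter Topology

theorem ConvexOn.comp_of_mapsTo {E : Type*} [AddCommGroup E] [Module ℝ E] {s : Set E}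
    {t : Set ℝ} {f : E → ℝ} {g : ℝ → ℝ} (hg : ConvexOn ℝ t g) (hf : ConvexOn ℝ s f)
    (hg_mono : MonotoneOn g t) (hst : MapsTo f s t) : ConvexOn ℝ s (g ∘ f) :=
  ⟨hf.1, fun _ hx _ hy _ _ hp hq hpq =>
    (hg_mono (hst (hf.1 hx hy hp hq hpq)) (hg.1 (hst hx) (hst hy) hp hq hpq)
      (hf.2 hx hy hp hq hpq)).trans (hg.2 (hst hx) (hst hy) hp hq hpq)⟩

theorem convexOn_Ioi_comp_add_iff {g : ℝ → ℝ} {a c : ℝ} :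
    ConvexOn ℝ (Ioi a) (fun x => g (x + c)) ↔ ConvexOn ℝ (Ioi (a + c)) g := by
  constructor
  · intro h
    simpa [Function.comp_def, preimage_const_add_Ioi] using h.translate_left (-c)
  · intro h
    simpa [Function.comp_def, preimage_const_add_Ioi] using h.translate_left c

theorem ConvexOn.not_tendsto_nhdsGT_atBot {f : ℝ → ℝ} {a : ℝ} (hf : ConvexOn ℝ (Ioi a) f) :
    ¬ Tendsto f (𝓝[>] a) atBot := by
  set D := f (a + 2) - f (a + 1)
  have hbound : ∀ x ∈ Ioo a (a + 1), f (a + 1) - |D| ≤ f x := by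
    rintro x ⟨hax, hx1⟩
    have hslope := hf.slope_mono_adjacent (x := x) (y := a + 1) (z := a + 2) hax
      (show a < a + 2 by linarith) hx1 (by linarith)
    rw [show a + 2 - (a + 1) = 1 by ring, div_one, div_le_iff₀ (by linarith)] at hslope
    nlinarith [le_abs_self D, abs_nonneg D]
  intro h
  obtain ⟨x, hx_lt, hx_mem⟩ := ((h.eventually (eventually_lt_atBot (f (a + 1) - |D|))).and
    (Ioo_mem_nhdsGT (show a < a + 1 by linarith))).exists
  exact (hbound x hx_mem).not_gt hx_lt

theorem convexOn_rpow_of_nonpos {p : ℝ} (hp : p ≤ 0) :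
    ConvexOn ℝ (Ioi 0) (fun x : ℝ => x ^ p) := by
  have hlin : ConvexOn ℝ (Ioi 0) (fun x => -p • -log x) :=
    strictConcaveOn_log_Ioi.concaveOn.neg.smul (neg_nonneg.2 hp)
  refine (convexOn_exp.comp_of_mapsTo hlin (exp_monotone.monotoneOn _) (mapsTo_univ _ _)).congr ?_
  intro x hx
  simp [rpow_def_of_pos (mem_Ioi.1 hx), mul_comm]

theorem convexOn_neg_log_one_sub : ConvexOn ℝ (Iio 1) (fun t => -log (1 - t)) := by
  -- `log (1 - t) = log (t - 1)`, and `log` is concave on `Iio 0`.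
  have hconc : ConcaveOn ℝ (Iio 1) (fun t => log (1 - t)) := by
    simpa [Function.comp_def, preimage_const_add_Iio, ← log_neg_eq_log (_ + -1), sub_eq_add_neg]
      using strictConcaveOn_log_Iio.concaveOn.translate_left (-1)
  exact hconc.neg

theorem monotoneOn_neg_log_one_sub : MonotoneOn (fun t => -log (1 - t)) (Iio 1) := by
  intro x hx y hy hxy
  simp only [neg_le_neg_iff]
  exact log_le_log (by simpa using hy) (by linarith)

theorem convexOn_neg_log_one_sub_rpow {p : ℝ} (hp : p < 0) :
    ConvexOn ℝ (Ioi 1) (fun y : ℝ => -log (1 - y ^ p)) :=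
  convexOn_neg_log_one_sub.comp_of_mapsTo
    ((convexOn_rpow_of_nonpos hp.le).subset (Ioi_subset_Ioi zero_le_one) (convex_Ioi 1))
    monotoneOn_neg_log_one_sub fun _ hy => rpow_lt_one_of_one_lt_of_neg hy hp

theorem log_rpow_sub_one {y c : ℝ} (hy : 1 < y) (hc : 0 < c) :
    log (y ^ c - 1) = c * log y + log (1 - y ^ (-c)) := by
  have hy0 : 0 < y := by linarith
  have hyc : y ^ (-c) < 1 := rpow_lt_one_of_one_lt_of_neg hy (neg_lt_zero.2 hc)
  rw [← log_rpow hy0, ← log_mul (rpow_pos_of_pos hy0 c).ne' (by linarith), mul_sub, mul_one,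
    ← rpow_add hy0, add_neg_cancel, rpow_zero]

noncomputable def fBetaLogProfile (a b s y : ℝ) : ℝ :=
  log (Gamma (a + b) / (s * Gamma a * Gamma b)) - (a / s + 1) * log y
    + (b - 1) * log (1 - y ^ (-(1 / s)))

theorem log_fBeta_eq {a b s x : ℝ} (ha : 0 < a) (hb : 0 < b) (hs : 0 < s) (hx : 0 < x) :
    log (fBeta a b s x) = fBetaLogProfile a b s (x + 1) := by
  have hy : 1 < x + 1 := by linarith
  have hy0 : 0 < x + 1 := by linarith
  have hz : 0 < (x + 1) ^ (1 / s) - 1 :=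
    sub_pos.2 (one_lt_rpow hy (by positivity))
  have hC : 0 < Gamma (a + b) / (s * Gamma a * Gamma b) := by
    have := Gamma_pos_of_pos ha; have := Gamma_pos_of_pos hb
    have := Gamma_pos_of_pos (add_pos ha hb); positivity
  rw [fBeta, fBetaLogProfile, log_mul (by positivity) (by positivity),
    log_mul hC.ne' (by positivity), log_rpow hy0, log_rpow hz,
    log_rpow_sub_one hy (by positivity)]
  ring

theorem convexOn_fBetaLogProfile {a b s : ℝ} (ha : 0 ≤ a) (hs : 0 < s) (hb : b ≤ 1) :
    ConvexOn ℝ (Ioi 1) (fBetaLogProfile a b s) := by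
  have hlog : ConcaveOn ℝ (Ioi 1) log :=
    strictConcaveOn_log_Ioi.concaveOn.subset (Ioi_subset_Ioi zero_le_one) (convex_Ioi 1)
  have hsum :=
    ((convexOn_const (log (Gamma (a + b) / (s * Gamma a * Gamma b))) (convex_Ioi 1)).sub
      (hlog.smul (by positivity : 0 ≤ a / s + 1))).add
      ((convexOn_neg_log_one_sub_rpow (neg_lt_zero.2 (one_div_pos.2 hs))).smul
        (sub_nonneg.2 hb))
  refine hsum.congr fun y _ => ?_
  simp only [Pi.add_apply, Pi.sub_apply, smul_eq_mul, fBetaLogProfile]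
  ring

theorem tendsto_fBetaLogProfile_nhdsGT_one {a b s : ℝ} (hs : 0 < s) (hb : 1 < b) :
    Tendsto (fBetaLogProfile a b s) (𝓝[>] 1) atBot := by
  have hsmooth : Tendsto (fun y => log (Gamma (a + b) / (s * Gamma a * Gamma b))
      - (a / s + 1) * log y) (𝓝[>] 1) (𝓝 (log (Gamma (a + b) / (s * Gamma a * Gamma b))
      - (a / s + 1) * log 1)) :=
    (continuousAt_const.sub (continuousAt_const.mul (continuousAt_log one_ne_zero))).tendsto
      |>.mono_left nhdsWithin_le_nhds
  have hgap : Tendsto (fun y : ℝ => 1 - y ^ (-(1 / s))) (𝓝[>] 1) (𝓝[>] 0) := by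
    refine tendsto_nhdsWithin_of_tendsto_nhds_of_eventually_within _ ?_ ?_
    · have : ContinuousAt (fun y : ℝ => 1 - y ^ (-(1 / s))) 1 :=
        continuousAt_const.sub (continuousAt_rpow_const _ _ (Or.inl one_ne_zero))
      simpa using this.tendsto.mono_left nhdsWithin_le_nhds
    · filter_upwards [self_mem_nhdsWithin] with y hy
      exact sub_pos.2 (rpow_lt_one_of_one_lt_of_neg hy (neg_lt_zero.2 (one_div_pos.2 hs)))
  exact hsmooth.add_atBot ((tendsto_log_nhdsGT_zero.comp hgap).const_mul_atBot (sub_pos.2 hb))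

theorem fBeta_logConvex_iff (a b s : ℝ) (ha : 0 < a) (hb : 0 < b) (hs : 0 < s) :
    ConvexOn ℝ (Set.Ioi 0) (fun x => Real.log (fBeta a b s x)) ↔ b ≤ 1 := by
  have hprofile : EqOn (fun x => log (fBeta a b s x)) (fun x => fBetaLogProfile a b s (x + 1))
      (Ioi 0) := fun x hx => log_fBeta_eq ha hb hs hx
  have hshift : ConvexOn ℝ (Ioi 0) (fun x => log (fBeta a b s x)) ↔
      ConvexOn ℝ (Ioi (0 + 1)) (fBetaLogProfile a b s) := by
    rw [← convexOn_Ioi_comp_add_iff]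
    exact ⟨fun h => h.congr hprofile, fun h => h.congr hprofile.symm⟩
  rw [hshift, zero_add]
  refine ⟨fun hconv => ?_, convexOn_fBetaLogProfile ha.le hs⟩
  by_contra! hb1
  exact hconv.not_tendsto_nhdsGT_atBot (tendsto_fBetaLogProfile_nhdsGT_one hs hb1)
end

section
/- For a, b, s > 0, one has the evaluation 1 - ∫₀^∞ ρ_{a,b,s}(x) dx = Γ(a+b)Γ(a+s)/(Γ(a)Γ(a+b+s)), where ρ_{a,b,s}(x) = b s e^{-(a+b)x} ₂F₁(1+b, 1-s; 2; 1-e^{-x}). -/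
open Real MeasureTheory

noncomputable def poch (x : ℝ) (n : ℕ) : ℝ := (ascPochhammer ℝ n).eval x

noncomputable def hyp2F1 (l m v z : ℝ) : ℝ :=
  ∑' n : ℕ, poch l n * poch m n / (poch v n * n.factorial) * z ^ n

noncomputable def rho (a b s x : ℝ) : ℝ :=
  b * s * Real.exp (-(a + b) * x) * hyp2F1 (1 + b) (1 - s) 2 (1 - Real.exp (-x))

/-!
Expanding `₂F₁` termwise, the `n`-th term of `ρ` integrates against `e^{-(a+b)x} (1 - e^{-x})^n`
to a multiple of `n! / (a+b)_{n+1}`, and `∫ ρ` becomes `-∑_{m ≥ 1} (b)_m (-s)_m / ((a+b)_m m!)`,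
that is `1 - ₂F₁(b, -s; a+b; 1)`. Gauss's summation
`₂F₁(b, -s; a+b; 1) = Γ(a+b)Γ(a+s)/(Γ(a)Γ(a+b+s))` follows by writing `(b)_m / (a+b)_m` as the
Beta ratio `B(b+m, a) / B(b, a)` and summing the binomial series `∑ (-s)_m t^m / m! = (1 - t)^s`
under the integral. Both exchanges of sum and integral rest on `∑ |(-s)_m / m!| < ∞` for `s > 0`,
a telescoping (Raabe) argument.
-/

open Set
open scoped Nat

lemma poch_zero (x : ℝ) : poch x 0 = 1 := by simp [poch]

lemma poch_succ_right (x : ℝ) (n : ℕ) : poch x (n + 1) = poch x n * (x + n) := by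
  simp [poch, ascPochhammer_succ_right]

lemma poch_succ_left (x : ℝ) (n : ℕ) : poch x (n + 1) = x * poch (x + 1) n := by
  simp [poch, ascPochhammer_succ_left, Polynomial.eval_comp]

lemma poch_pos {x : ℝ} (hx : 0 < x) (n : ℕ) : 0 < poch x n := by
  induction n with
  | zero => simp [poch_zero]
  | succ n ih => rw [poch_succ_right]; positivity

lemma poch_le_poch {x y : ℝ} (hx : 0 < x) (hxy : x ≤ y) (n : ℕ) : poch x n ≤ poch y n := by
  induction n with
  | zero => simp [poch_zero]
  | succ n ih =>
    rw [poch_succ_right, poch_succ_right]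
    exact mul_le_mul ih (by linarith) (by positivity) (poch_pos (hx.trans_le hxy) n).le

lemma poch_two (n : ℕ) : poch 2 n = (n + 1)! := by
  induction n with
  | zero => simp [poch_zero]
  | succ n ih => rw [poch_succ_right, ih, Nat.factorial_succ (n + 1)]; push_cast; ring

lemma poch_neg (s : ℝ) (n : ℕ) : poch (-s) n = (-1) ^ n * n ! * Ring.choose s n := by
  rw [poch, ← Polynomial.ascPochhammer_smeval_eq_eval,
    Polynomial.ascPochhammer_smeval_neg_eq_descPochhammer,
    Ring.descPochhammer_eq_factorial_smul_choose, Int.negOnePow_def, zpow_natCast, nsmul_eq_mul,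
    Units.smul_def, zsmul_eq_mul]
  push_cast
  ring

lemma Gamma_add_nat {x : ℝ} (hx : 0 < x) (n : ℕ) : Gamma (x + n) = Gamma x * poch x n := by
  induction n with
  | zero => simp [poch_zero]
  | succ n ih =>
    rw [Nat.cast_succ, ← add_assoc, Gamma_add_one (by positivity), ih, poch_succ_right]
    ring

lemma summable_of_succ_mul_le {u : ℕ → ℝ} {s : ℝ} {N : ℕ} (hs : 0 < s) (hu : ∀ n, 0 ≤ u n)
    (h : ∀ n ≥ N, (n + 1) * u (n + 1) ≤ (n - s) * u n) : Summable u := by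
  rw [← summable_nat_add_iff N]
  set w : ℕ → ℝ := fun k => ((k + N : ℕ) : ℝ) * u (k + N)
  have step (k : ℕ) : u (k + N) ≤ (w k - w (k + 1)) / s := by
    have := h (k + N) (Nat.le_add_left N k)
    rw [le_div_iff₀ hs]
    simp only [w, Nat.add_right_comm k 1 N]
    push_cast at this ⊢
    linarith
  refine summable_of_sum_range_le (c := w 0 / s) (fun n => hu _) fun n => ?_
  calc ∑ k ∈ Finset.range n, u (k + N) ≤ ∑ k ∈ Finset.range n, (w k - w (k + 1)) / s :=
        Finset.sum_le_sum fun k _ => step k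
    _ = (w 0 - w n) / s := by rw [← Finset.sum_div, Finset.sum_range_sub']
    _ ≤ w 0 / s := by gcongr; exact sub_le_self _ (mul_nonneg (Nat.cast_nonneg _) (hu _))

lemma summable_abs_poch_neg_div_factorial {s : ℝ} (hs : 0 < s) :
    Summable fun n => |poch (-s) n / n !| := by
  refine summable_of_succ_mul_le (N := ⌈s⌉₊) hs (fun n => abs_nonneg _) fun n hn => ?_
  have hsn : s ≤ n := (Nat.le_ceil s).trans (Nat.cast_le.2 hn)
  have hrec : poch (-s) (n + 1) / (n + 1)! * (n + 1) = poch (-s) n / n ! * (n - s) := by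
    rw [poch_succ_right, Nat.factorial_succ]
    push_cast
    field_simp
    ring
  refine le_of_eq ?_
  calc ((n : ℝ) + 1) * |poch (-s) (n + 1) / (n + 1)!|
      = |poch (-s) (n + 1) / (n + 1)! * (n + 1)| := by
        rw [abs_mul, abs_of_pos (by positivity : (0 : ℝ) < n + 1), mul_comm]
    _ = (n - s) * |poch (-s) n / n !| := by
        rw [hrec, abs_mul, abs_of_nonneg (sub_nonneg.2 hsn), mul_comm]

lemma hasSum_poch_neg_div_factorial_mul_pow (s : ℝ) {t : ℝ} (ht : |t| < 1) :
    HasSum (fun n => poch (-s) n / n ! * t ^ n) ((1 - t) ^ s) := by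
  have h := one_add_rpow_hasFPowerSeriesOnBall_zero (a := s).hasSum (y := -t)
    (by simpa [Metric.mem_eball, edist_dist, Real.dist_eq] using ht)
  simp only [FormalMultilinearSeries.ofScalars_apply_eq, binomialSeries, zero_sub,
    ← sub_eq_add_neg] at h
  refine h.congr_fun fun n => ?_
  rw [poch_neg, smul_eq_mul, neg_pow t]
  field_simp

lemma hasSum_integral_mul_of_nonneg {α : Type*} [MeasurableSpace α] {μ : Measure α}
    {c : ℕ → ℝ} {g : ℕ → α → ℝ} (hg : ∀ n, 0 ≤ᵐ[μ] g n) (hgi : ∀ n, Integrable (g n) μ)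
    (hsum : Summable fun n => |c n * ∫ x, g n x ∂μ|) :
    HasSum (fun n => c n * ∫ x, g n x ∂μ) (∫ x, ∑' n, c n * g n x ∂μ) := by
  have hnorm (n : ℕ) : ∫ x, ‖c n * g n x‖ ∂μ = |c n * ∫ x, g n x ∂μ| := by
    rw [abs_mul, abs_of_nonneg (integral_nonneg_of_ae (hg n)), ← integral_const_mul]
    refine integral_congr_ae ((hg n).mono fun x hx => ?_)
    simp only [norm_mul, Real.norm_eq_abs, abs_of_nonneg hx]
  simpa only [integral_const_mul] using
    hasSum_integral_of_summable_integral_norm (fun n => (hgi n).const_mul (c n))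
      (by simpa only [hnorm] using hsum)

lemma ofReal_rpow_mul_one_sub_rpow {p q t : ℝ} (ht : t ∈ Icc (0 : ℝ) 1) :
    ((t ^ (p - 1) * (1 - t) ^ (q - 1) : ℝ) : ℂ)
      = (t : ℂ) ^ ((p : ℂ) - 1) * (1 - (t : ℂ)) ^ ((q : ℂ) - 1) := by
  rw [Complex.ofReal_mul, Complex.ofReal_cpow ht.1, Complex.ofReal_cpow (sub_nonneg.2 ht.2)]
  push_cast
  rfl

lemma integrableOn_rpow_mul_one_sub_rpow {p q : ℝ} (hp : 0 < p) (hq : 0 < q) :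
    IntegrableOn (fun t : ℝ => t ^ (p - 1) * (1 - t) ^ (q - 1)) (Ioo 0 1) := by
  have h := Complex.betaIntegral_convergent (u := p) (v := q) (by simpa) (by simpa)
  rw [intervalIntegrable_iff_integrableOn_Ioc_of_le zero_le_one] at h
  refine IntegrableOn.congr_fun (h.mono_set Ioo_subset_Ioc_self).re (fun t ht => ?_)
    measurableSet_Ioo
  rw [← ofReal_rpow_mul_one_sub_rpow (Ioo_subset_Icc_self ht), RCLike.re_to_complex,
    Complex.ofReal_re]

lemma integral_rpow_mul_one_sub_rpow {p q : ℝ} (hp : 0 < p) (hq : 0 < q) :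
    ∫ t in Ioo (0 : ℝ) 1, t ^ (p - 1) * (1 - t) ^ (q - 1) = Gamma p * Gamma q / Gamma (p + q) := by
  have h := Complex.betaIntegral_eq_Gamma_mul_div p q (by simpa) (by simpa)
  rw [Complex.betaIntegral, intervalIntegral.integral_of_le zero_le_one,
    integral_Ioc_eq_integral_Ioo, ← setIntegral_congr_fun measurableSet_Ioo
      fun t ht => ofReal_rpow_mul_one_sub_rpow (p := p) (q := q) (Ioo_subset_Icc_self ht),
    integral_complex_ofReal, ← Complex.ofReal_add, Complex.Gamma_ofReal, Complex.Gamma_ofReal,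
    Complex.Gamma_ofReal] at h
  exact_mod_cast h

lemma pow_mul_rpow_mul_one_sub_rpow {p q t : ℝ} (ht : 0 < t) (n : ℕ) :
    t ^ n * (t ^ (p - 1) * (1 - t) ^ (q - 1)) = t ^ (p + n - 1) * (1 - t) ^ (q - 1) := by
  rw [show p + n - 1 = (p - 1) + n by ring, rpow_add ht, rpow_natCast]
  ring

lemma integrableOn_pow_mul_rpow_mul_one_sub_rpow {p q : ℝ} (hp : 0 < p) (hq : 0 < q) (n : ℕ) :
    IntegrableOn (fun t : ℝ => t ^ n * (t ^ (p - 1) * (1 - t) ^ (q - 1))) (Ioo 0 1) :=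
  (integrableOn_rpow_mul_one_sub_rpow (by positivity) hq).congr_fun
    (fun _ ht => (pow_mul_rpow_mul_one_sub_rpow ht.1 n).symm) measurableSet_Ioo

lemma integral_pow_mul_rpow_mul_one_sub_rpow {p q : ℝ} (hp : 0 < p) (hq : 0 < q) (n : ℕ) :
    ∫ t in Ioo (0 : ℝ) 1, t ^ n * (t ^ (p - 1) * (1 - t) ^ (q - 1))
      = Gamma p * Gamma q / Gamma (p + q) * (poch p n / poch (p + q) n) := by
  rw [setIntegral_congr_fun measurableSet_Ioo fun _ ht => pow_mul_rpow_mul_one_sub_rpow ht.1 n,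
    integral_rpow_mul_one_sub_rpow (by positivity) hq, show p + n + q = p + q + n by ring,
    Gamma_add_nat hp, Gamma_add_nat (by positivity)]
  have := (Gamma_pos_of_pos (add_pos hp hq)).ne'
  have := (poch_pos (add_pos hp hq) n).ne'
  field_simp

section Gauss

variable {a b s : ℝ}

/-- The `m`-th term of the hypergeometric series `₂F₁(b, -s; a + b; 1)`. -/
noncomputable def gaussTerm (a b s : ℝ) (m : ℕ) : ℝ :=
  poch b m * poch (-s) m / (poch (a + b) m * m !)

lemma gaussTerm_zero (a b s : ℝ) : gaussTerm a b s 0 = 1 := by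
  simp [gaussTerm, poch_zero]

lemma summable_abs_gaussTerm (ha : 0 < a) (hb : 0 < b) (hs : 0 < s) :
    Summable fun m => |gaussTerm a b s m| := by
  refine (summable_abs_poch_neg_div_factorial hs).of_nonneg_of_le (fun _ => abs_nonneg _)
    fun m => ?_
  have hpos := poch_pos (add_pos ha hb) m
  have hratio : poch b m / poch (a + b) m ≤ 1 :=
    (div_le_one hpos).2 (poch_le_poch hb (by linarith) m)
  calc |gaussTerm a b s m| = poch b m / poch (a + b) m * |poch (-s) m / m !| := by
        rw [gaussTerm, mul_div_mul_comm, abs_mul, abs_of_pos (div_pos (poch_pos hb m) hpos)]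
    _ ≤ |poch (-s) m / m !| := mul_le_of_le_one_left (abs_nonneg _) hratio

theorem hasSum_gaussTerm (ha : 0 < a) (hb : 0 < b) (hs : 0 < s) :
    HasSum (gaussTerm a b s) (Gamma (a + b) * Gamma (a + s) / (Gamma a * Gamma (a + b + s))) := by
  have hGa := Gamma_pos_of_pos ha
  have hGb := Gamma_pos_of_pos hb
  have hGab := Gamma_pos_of_pos (add_pos hb ha)
  set B := Gamma b * Gamma a / Gamma (b + a) with hB_def
  have hB : 0 < B := by positivity
  have hmoment (m : ℕ) :
      poch (-s) m / m ! * ∫ t in Ioo (0 : ℝ) 1, t ^ m * (t ^ (b - 1) * (1 - t) ^ (a - 1))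
        = B * gaussTerm a b s m := by
    rw [integral_pow_mul_rpow_mul_one_sub_rpow hb ha, gaussTerm, add_comm a b, hB_def]
    have := (poch_pos (add_pos hb ha) m).ne'
    field_simp
  have hsum := hasSum_integral_mul_of_nonneg (μ := volume.restrict (Ioo 0 1))
    (c := fun m => poch (-s) m / m !) (g := fun m t => t ^ m * (t ^ (b - 1) * (1 - t) ^ (a - 1)))
    (fun m => ae_restrict_of_forall_mem measurableSet_Ioo fun t ht =>
      mul_nonneg (pow_nonneg ht.1.le m)
        (mul_nonneg (rpow_nonneg ht.1.le _) (rpow_nonneg (sub_nonneg.2 ht.2.le) _)))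
    (integrableOn_pow_mul_rpow_mul_one_sub_rpow hb ha)
    (by simpa only [hmoment, abs_mul, abs_of_pos hB] using
      (summable_abs_gaussTerm ha hb hs).mul_left B)
  have hbinom :
      ∫ t in Ioo (0 : ℝ) 1, ∑' m, poch (-s) m / m ! * (t ^ m * (t ^ (b - 1) * (1 - t) ^ (a - 1)))
        = Gamma b * Gamma (a + s) / Gamma (b + (a + s)) := by
    rw [← integral_rpow_mul_one_sub_rpow hb (by positivity)]
    refine setIntegral_congr_fun measurableSet_Ioo fun t ht => ?_
    simp_rw [← mul_assoc]
    rw [tsum_mul_right, tsum_mul_right, (hasSum_poch_neg_div_factorial_mul_pow s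
      (abs_lt.2 ⟨by linarith [ht.1], ht.2⟩)).tsum_eq, show a + s - 1 = s + (a - 1) by ring,
      rpow_add (sub_pos.2 ht.2)]
    ring
  simp only [hmoment, hbinom] at hsum
  have hvalue : Gamma b * Gamma (a + s) / Gamma (b + (a + s)) / B
      = Gamma (a + b) * Gamma (a + s) / (Gamma a * Gamma (a + b + s)) := by
    rw [show b + (a + s) = a + b + s by ring, add_comm a b, hB_def]
    field_simp
  rw [← hvalue]
  exact (hsum.div_const B).congr_fun fun m => by field_simp

end Gauss

lemma one_sub_exp_neg_nonneg {x : ℝ} (hx : 0 ≤ x) : 0 ≤ 1 - exp (-x) :=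
  sub_nonneg.2 (exp_le_one_iff.2 (neg_nonpos.2 hx))

lemma integrableOn_exp_mul_one_sub_exp_pow {c : ℝ} (hc : 0 < c) (n : ℕ) :
    IntegrableOn (fun x => exp (-c * x) * (1 - exp (-x)) ^ n) (Ioi 0) := by
  refine (exp_neg_integrableOn_Ioi 0 hc).mono' (by fun_prop) ?_
  filter_upwards [ae_restrict_mem measurableSet_Ioi] with x hx
  have h0 := one_sub_exp_neg_nonneg (le_of_lt hx)
  have h1 : 1 - exp (-x) ≤ 1 := by linarith [exp_pos (-x)]
  rw [norm_mul, Real.norm_of_nonneg (exp_pos _).le, Real.norm_of_nonneg (pow_nonneg h0 n)]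
  exact mul_le_of_le_one_right (exp_pos _).le (pow_le_one₀ h0 h1)

lemma integral_exp_mul_one_sub_exp_pow {c : ℝ} (hc : 0 < c) (n : ℕ) :
    ∫ x in Ioi 0, exp (-c * x) * (1 - exp (-x)) ^ n = n ! / poch c (n + 1) := by
  induction n generalizing c with
  | zero =>
    simpa [poch_succ_right, poch_zero, neg_div_neg_eq] using
      integral_exp_mul_Ioi (neg_lt_zero.2 hc) 0
  | succ n ih =>
    have hc1 : 0 < c + 1 := by linarith
    have hsplit (x : ℝ) : exp (-c * x) * (1 - exp (-x)) ^ (n + 1)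
        = exp (-c * x) * (1 - exp (-x)) ^ n - exp (-(c + 1) * x) * (1 - exp (-x)) ^ n := by
      rw [show -(c + 1) * x = -c * x + -x by ring, exp_add]
      ring
    simp_rw [hsplit]
    rw [integral_sub (integrableOn_exp_mul_one_sub_exp_pow hc n)
      (integrableOn_exp_mul_one_sub_exp_pow hc1 n), ih hc, ih hc1]
    have hright : poch c (n + 1 + 1) = poch c (n + 1) * (c + (n + 1)) := by
      rw [poch_succ_right]; push_cast; ring
    have hleft : poch c (n + 1 + 1) = c * poch (c + 1) (n + 1) := poch_succ_left c (n + 1)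
    have h1 := (poch_pos hc (n + 1)).ne'
    have h2 := (poch_pos hc1 (n + 1)).ne'
    rw [div_sub_div _ _ h1 h2, div_eq_div_iff (mul_ne_zero h1 h2) (poch_pos hc _).ne',
      Nat.factorial_succ]
    push_cast
    linear_combination (n ! * poch (c + 1) (n + 1)) * hright - (n ! * poch c (n + 1)) * hleft

section Rho

variable {a b s : ℝ}

lemma rho_eq_tsum (a b s x : ℝ) :
    rho a b s x = ∑' n, b * s * (poch (1 + b) n * poch (1 - s) n / (poch 2 n * n !)) *
      (exp (-(a + b) * x) * (1 - exp (-x)) ^ n) := by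
  rw [rho, hyp2F1, ← tsum_mul_left]
  exact tsum_congr fun n => by ring

lemma rho_coeff_mul_integral (hab : 0 < a + b) (n : ℕ) :
    b * s * (poch (1 + b) n * poch (1 - s) n / (poch 2 n * n !)) *
      ∫ x in Ioi 0, exp (-(a + b) * x) * (1 - exp (-x)) ^ n = -gaussTerm a b s (n + 1) := by
  rw [integral_exp_mul_one_sub_exp_pow hab, gaussTerm, poch_succ_left b, poch_succ_left (-s),
    poch_two, add_comm b 1, neg_add_eq_sub, Nat.factorial_succ]
  have := (poch_pos hab (n + 1)).ne'
  push_cast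
  field_simp

lemma hasSum_integral_rho (ha : 0 < a) (hb : 0 < b) (hs : 0 < s) :
    HasSum (fun n => -gaussTerm a b s (n + 1)) (∫ x in Ioi 0, rho a b s x) := by
  have hab := add_pos ha hb
  have h := hasSum_integral_mul_of_nonneg (μ := volume.restrict (Ioi 0))
    (c := fun n => b * s * (poch (1 + b) n * poch (1 - s) n / (poch 2 n * n !)))
    (g := fun n x => exp (-(a + b) * x) * (1 - exp (-x)) ^ n)
    (fun n => ae_restrict_of_forall_mem measurableSet_Ioi fun x hx =>
      mul_nonneg (exp_pos _).le (pow_nonneg (one_sub_exp_neg_nonneg (le_of_lt hx)) n))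
    (integrableOn_exp_mul_one_sub_exp_pow hab)
    (by simpa only [rho_coeff_mul_integral hab, abs_neg] using
      (summable_nat_add_iff 1).2 (summable_abs_gaussTerm ha hb hs))
  simpa only [rho_coeff_mul_integral hab, ← rho_eq_tsum] using h

end Rho

theorem one_sub_integral_rho (a b s : ℝ) (ha : 0 < a) (hb : 0 < b) (hs : 0 < s) :
    1 - ∫ x in Set.Ioi (0:ℝ), rho a b s x
      = Gamma (a + b) * Gamma (a + s) / (Gamma a * Gamma (a + b + s)) := by
  have htail := (hasSum_nat_add_iff' 1).2 (hasSum_gaussTerm ha hb hs)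
  rw [Finset.sum_range_one, gaussTerm_zero] at htail
  rw [(hasSum_integral_rho ha hb hs).unique htail.neg]
  ring
end

section
/- Define g_{a,b,s}(x) = (x+1)^{(1-a-b)/s - 1} · (s(( x+1)^{1/s} - 1)/x)^{b-1} for x > 0. Then g_{a,b,s}(x) → 1 as x → 0+, and the derivative of G = -log g_{a,b,s} satisfies G'(x) = (a+s)/(s(x+1)) + (b-1)(1/x - 1/(s(x+1)((x+1)^{1/s}-1))), with G'(0+) = (s+a)/s + (b-1)(s+1)/(2s). -/
open Real Filter

noncomputable def gBeta (a b s x : ℝ) : ℝ :=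
  (x + 1) ^ ((1 - a - b) / s - 1) * (s * ((x + 1) ^ (1 / s) - 1) / x) ^ (b - 1)

/-! With `u x = (x + 1) ^ (1 / s) - 1`, one has `u x / x → 1 / s`, which gives `g → 1`, and
`-log g = -((1 - a - b) / s - 1) log (x + 1) - (b - 1) (log s + log u - log x)` differentiates
termwise. The singular part `1 / x - 1 / (s (x + 1) u)` of `G'` equals
`φ x / x ^ 2 * (x / (s (x + 1) u))` with `φ x = s (x + 1) u - x`; since `φ 0 = 0` and
`φ' = (s + 1) u`, l'Hôpital gives `φ x / x ^ 2 → (s + 1) / (2 s)`. -/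

open Set Topology

lemma hasDerivAt_add_one_rpow (p : ℝ) {x : ℝ} (hx : -1 < x) :
    HasDerivAt (fun y : ℝ => (y + 1) ^ p) (p * (x + 1) ^ (p - 1)) x := by
  simpa using ((hasDerivAt_id x).add_const 1).rpow_const (p := p)
    (Or.inl (show x + 1 ≠ 0 by linarith))

lemma tendsto_add_one_rpow_sub_one_div (p : ℝ) :
    Tendsto (fun x : ℝ => ((x + 1) ^ p - 1) / x) (𝓝[≠] 0) (𝓝 p) := by
  have h := hasDerivAt_iff_tendsto_slope_zero.mp (hasDerivAt_add_one_rpow p (x := 0) (by norm_num))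
  simpa [zero_add, div_eq_inv_mul] using h

lemma tendsto_add_one_rpow_nhds_zero (p : ℝ) :
    Tendsto (fun x : ℝ => (x + 1) ^ p) (𝓝 0) (𝓝 1) := by
  simpa using ((continuous_add_const (1 : ℝ)).tendsto 0).rpow_const (p := p) (Or.inl (by norm_num))

lemma add_one_rpow_sub_one_pos {p x : ℝ} (hp : 0 < p) (hx : 0 < x) : 0 < (x + 1) ^ p - 1 :=
  sub_pos.2 (one_lt_rpow (by linarith) hp)

lemma tendsto_mul_add_one_rpow_sub_one_div {s : ℝ} (hs : s ≠ 0) :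
    Tendsto (fun x : ℝ => s * ((x + 1) ^ (1 / s) - 1) / x) (𝓝[≠] 0) (𝓝 1) := by
  have h := (tendsto_add_one_rpow_sub_one_div (1 / s)).const_mul s
  rw [mul_one_div_cancel hs] at h
  simpa only [mul_div_assoc] using h

lemma tendsto_gBeta_nhdsGT_zero (a b : ℝ) {s : ℝ} (hs : s ≠ 0) :
    Tendsto (gBeta a b s) (𝓝[>] 0) (𝓝 1) := by
  have hpow := (tendsto_add_one_rpow_nhds_zero ((1 - a - b) / s - 1)).mono_left
    (nhdsWithin_le_nhds (s := Ioi 0))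
  have hquot := ((tendsto_mul_add_one_rpow_sub_one_div hs).mono_left
    (nhdsGT_le_nhdsNE 0)).rpow_const (p := b - 1) (Or.inl one_ne_zero)
  unfold gBeta
  simpa only [one_rpow, mul_one] using hpow.mul hquot

lemma log_gBeta (a b : ℝ) {s x : ℝ} (hs : 0 < s) (hx : 0 < x) :
    log (gBeta a b s x) = ((1 - a - b) / s - 1) * log (x + 1)
      + (b - 1) * (log s + log ((x + 1) ^ (1 / s) - 1) - log x) := by
  have hu : 0 < (x + 1) ^ (1 / s) - 1 := add_one_rpow_sub_one_pos (by positivity) hx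
  rw [gBeta, log_mul (by positivity) (by positivity), log_rpow (by linarith),
    log_rpow (by positivity), log_div (by positivity) hx.ne', log_mul hs.ne' hu.ne']

lemma hasDerivAt_neg_log_gBeta (a b : ℝ) {s x : ℝ} (hs : 0 < s) (hx : 0 < x) :
    HasDerivAt (fun y => -log (gBeta a b s y))
      ((a + s) / (s * (x + 1))
        + (b - 1) * (1 / x - 1 / (s * (x + 1) * ((x + 1) ^ (1 / s) - 1)))) x := by
  have hx1 : 0 < x + 1 := by linarith
  have hu : 0 < (x + 1) ^ (1 / s) - 1 := add_one_rpow_sub_one_pos (by positivity) hx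
  have hlog_add_one : HasDerivAt (fun y : ℝ => log (y + 1)) (1 / (x + 1)) x := by
    simpa using ((hasDerivAt_id x).add_const 1).log hx1.ne'
  have hlog_u : HasDerivAt (fun y : ℝ => log ((y + 1) ^ (1 / s) - 1))
      (1 / s * (x + 1) ^ (1 / s - 1) / ((x + 1) ^ (1 / s) - 1)) x :=
    ((hasDerivAt_add_one_rpow (1 / s) (by linarith)).sub_const 1).log hu.ne'
  have hF := (((hlog_add_one.const_mul ((1 - a - b) / s - 1)).add
    (((hlog_u.const_add (log s)).sub (hasDerivAt_log hx.ne')).const_mul (b - 1))).neg)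
  refine (hF.congr_of_eventuallyEq ?_).congr_deriv ?_
  · filter_upwards [Ioi_mem_nhds hx] with y hy
    rw [log_gBeta a b hs hy]
    rfl
  · rw [rpow_sub hx1, rpow_one]
    field_simp
    ring

lemma tendsto_mul_add_one_rpow_sub_one_sub_div_sq {s : ℝ} (hs : s ≠ 0) :
    Tendsto (fun x : ℝ => (s * (x + 1) * ((x + 1) ^ (1 / s) - 1) - x) / x ^ 2) (𝓝[>] 0)
      (𝓝 ((s + 1) / (2 * s))) := by
  have hderiv : ∀ x ∈ Ioo (0 : ℝ) 1,
      HasDerivAt (fun y : ℝ => s * (y + 1) * ((y + 1) ^ (1 / s) - 1) - y)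
        ((s + 1) * ((x + 1) ^ (1 / s) - 1)) x := by
    intro x hx
    have hx1 : 0 < x + 1 := by linarith [hx.1]
    have h := (((hasDerivAt_id' x).add_const 1).const_mul s).mul
      ((hasDerivAt_add_one_rpow (1 / s) (by linarith)).sub_const 1) |>.sub (hasDerivAt_id' x)
    refine h.congr_deriv ?_
    rw [rpow_sub hx1, rpow_one]
    field_simp
    ring
  have hnum : Tendsto (fun y : ℝ => s * (y + 1) * ((y + 1) ^ (1 / s) - 1) - y) (𝓝[>] 0) (𝓝 0) := by
    have h := ((((continuous_add_const (1 : ℝ)).tendsto 0).const_mul s).mul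
      ((tendsto_add_one_rpow_nhds_zero (1 / s)).sub_const 1)).sub (tendsto_id (x := 𝓝 (0 : ℝ)))
    simpa using h.mono_left nhdsWithin_le_nhds
  have hden : Tendsto (fun y : ℝ => y ^ 2) (𝓝[>] 0) (𝓝 0) := by
    simpa using ((continuous_pow 2).tendsto (0 : ℝ)).mono_left nhdsWithin_le_nhds
  have hratio : Tendsto (fun x : ℝ => (s + 1) * ((x + 1) ^ (1 / s) - 1) / (2 * x)) (𝓝[>] 0)
      (𝓝 ((s + 1) / (2 * s))) := by
    have h := ((tendsto_add_one_rpow_sub_one_div (1 / s)).const_mul ((s + 1) / 2)).mono_left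
      (nhdsGT_le_nhdsNE 0)
    rw [mul_one_div, div_div] at h
    refine h.congr fun x => ?_
    ring
  exact HasDerivAt.lhopital_zero_right_on_Ioo zero_lt_one hderiv
    (fun x _ => by simpa using hasDerivAt_pow 2 x) (fun x hx => by linarith [hx.1]) hnum hden hratio

lemma tendsto_one_div_sub_one_div_mul_add_one_rpow_sub_one {s : ℝ} (hs : 0 < s) :
    Tendsto (fun x : ℝ => 1 / x - 1 / (s * (x + 1) * ((x + 1) ^ (1 / s) - 1))) (𝓝[>] 0)
      (𝓝 ((s + 1) / (2 * s))) := by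
  have hquot : Tendsto (fun x : ℝ => (s * (x + 1) * ((x + 1) ^ (1 / s) - 1) / x)⁻¹) (𝓝[>] 0)
      (𝓝 1) := by
    have h := ((((continuous_add_const (1 : ℝ)).tendsto 0).mono_left nhdsWithin_le_nhds).mul
      ((tendsto_mul_add_one_rpow_sub_one_div hs.ne').mono_left
        (nhdsGT_le_nhdsNE 0))).inv₀ (by norm_num)
    simpa [mul_div_assoc, mul_comm, mul_left_comm] using h
  have h := (tendsto_mul_add_one_rpow_sub_one_sub_div_sq hs.ne').mul hquot
  rw [mul_one] at h
  refine h.congr' ?_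
  filter_upwards [self_mem_nhdsWithin] with x (hx : 0 < x)
  have hu : 0 < (x + 1) ^ (1 / s) - 1 := add_one_rpow_sub_one_pos (by positivity) hx
  field_simp

lemma tendsto_deriv_neg_log_gBeta (a b : ℝ) {s : ℝ} (hs : 0 < s) :
    Tendsto (deriv fun y => -log (gBeta a b s y)) (𝓝[>] 0)
      (𝓝 ((s + a) / s + (b - 1) * (s + 1) / (2 * s))) := by
  have hfirst : Tendsto (fun x : ℝ => (a + s) / (s * (x + 1))) (𝓝[>] 0) (𝓝 ((a + s) / s)) := by
    have h := ((tendsto_const_nhds (x := a + s)).div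
      (((continuous_add_const (1 : ℝ)).tendsto 0).const_mul s) (by simpa using hs.ne')).mono_left
      (nhdsWithin_le_nhds (s := Ioi 0))
    rw [zero_add, mul_one] at h
    exact h
  have h := hfirst.add
    ((tendsto_one_div_sub_one_div_mul_add_one_rpow_sub_one hs).const_mul (b - 1))
  rw [show (a + s) / s + (b - 1) * ((s + 1) / (2 * s)) = (s + a) / s + (b - 1) * (s + 1) / (2 * s)
    by ring] at h
  refine h.congr' ?_
  filter_upwards [self_mem_nhdsWithin] with x (hx : 0 < x)
  exact ((hasDerivAt_neg_log_gBeta a b hs hx).deriv).symm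

theorem gBeta_properties_general (a b s : ℝ) (hs : 0 < s) :
    Tendsto (gBeta a b s) (nhdsWithin 0 (Set.Ioi 0)) (nhds 1) ∧
    (∀ x > (0:ℝ), deriv (fun y => -Real.log (gBeta a b s y)) x
        = (a + s) / (s * (x + 1))
          + (b - 1) * (1 / x - 1 / (s * (x + 1) * ((x + 1) ^ (1 / s) - 1)))) ∧
    Tendsto (deriv (fun y => -Real.log (gBeta a b s y)))
      (nhdsWithin 0 (Set.Ioi 0))
      (nhds ((s + a) / s + (b - 1) * (s + 1) / (2 * s))) :=
  ⟨tendsto_gBeta_nhdsGT_zero a b hs.ne', fun _ hx => (hasDerivAt_neg_log_gBeta a b hs hx).deriv,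
    tendsto_deriv_neg_log_gBeta a b hs⟩

theorem gBeta_properties (a b s : ℝ) (ha : 0 < a) (hb : 0 < b) (hs : 0 < s) :
    Tendsto (gBeta a b s) (nhdsWithin 0 (Set.Ioi 0)) (nhds 1) ∧
    (∀ x > (0:ℝ), deriv (fun y => -Real.log (gBeta a b s y)) x
        = (a + s) / (s * (x + 1))
          + (b - 1) * (1 / x - 1 / (s * (x + 1) * ((x + 1) ^ (1 / s) - 1)))) ∧
    Tendsto (deriv (fun y => -Real.log (gBeta a b s y)))
      (nhdsWithin 0 (Set.Ioi 0))
      (nhds ((s + a) / s + (b - 1) * (s + 1) / (2 * s))) :=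
  gBeta_properties_general a b s hs
end

section
/- With g_{a,b,s}(x) = (x+1)^{(1-a-b)/s - 1} · (s((x+1)^{1/s} - 1)/x)^{b-1}, one has the first-order expansion g_{a,b,s}(x) = 1 + c_{a,b,s} x + o(x) as x → 0+, where c_{a,b,s} = (1 - 2a - b - s - bs)/(2s). -/
/-! The bracket `s((x+1)^{1/s} - 1)/x` is `1 + (1/s - 1)x/2 + O(x²)` by the second-order binomial
expansion of `(1+x)^{1/s}`. Expansions of the form `1 + cx + o(x)` are stable under real powers
(`u^q = 1 + qcx + o(x)`) and multiply by adding their slopes, so `gBeta` has slope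
`(1 - a - b)/s - 1 + (b - 1)(1/s - 1)/2`, which simplifies to the stated constant. -/

open Real Filter Asymptotics

open Topology

theorem Ring.choose_two_eq {K : Type*} [Field K] [CharZero K] (p : K) :
    Ring.choose p 2 = p * (p - 1) / 2 := by
  rw [Ring.choose_eq_smul]
  simp [descPochhammer_succ_right, Polynomial.smeval_mul]
  ring

namespace Real

lemma one_add_rpow_sub_taylor_isBigO (p : ℝ) :
    (fun x : ℝ => (1 + x) ^ p - (1 + p * x + p * (p - 1) / 2 * x ^ 2)) =O[𝓝 0]
      fun x => x ^ 3 := by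
  have h := (one_add_rpow_hasFPowerSeriesAt_zero (a := p)).isBigO_sub_partialSum_pow 3
  rw [← isBigO_abs_right]
  simpa [FormalMultilinearSeries.partialSum, Finset.sum_range_succ, binomialSeries,
    FormalMultilinearSeries.coeff_ofScalars, Ring.choose_two_eq, mul_comm] using h

lemma one_add_rpow_sub_linear_isLittleO (p : ℝ) :
    (fun x : ℝ => (1 + x) ^ p - 1 - p * x) =o[𝓝 0] fun x => x := by
  have hquad : (fun x : ℝ => p * (p - 1) / 2 * x ^ 2) =o[𝓝 0] fun x => x :=
    (isLittleO_pow_id one_lt_two).const_mul_left _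
  refine ((one_add_rpow_sub_taylor_isBigO p).trans_isLittleO
    (isLittleO_pow_id (by norm_num))).add hquad |>.congr_left fun x => ?_
  ring

end Real

noncomputable def rpowSecant (s x : ℝ) : ℝ := s * ((x + 1) ^ (1 / s) - 1) / x

lemma rpowSecant_sub_linear_isLittleO {s : ℝ} (hs : s ≠ 0) :
    (fun x => rpowSecant s x - 1 - (1 / s - 1) / 2 * x) =o[𝓝[≠] 0] fun x => x := by
  have hR := (Real.one_add_rpow_sub_taylor_isBigO (1 / s)).mono (nhdsWithin_le_nhds (s := {0}ᶜ))
  have hcube : (fun x : ℝ => s / x * x ^ 3) =o[𝓝[≠] 0] fun x => x := by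
    refine ((isLittleO_pow_id one_lt_two).const_mul_left s).mono nhdsWithin_le_nhds
      |>.congr' ?_ EventuallyEq.rfl
    filter_upwards [self_mem_nhdsWithin] with x (hx : x ≠ 0)
    field_simp
  -- For `x ≠ 0` the error is `s / x` times the remainder of the binomial expansion of `(1+x)^(1/s)`.
  refine ((isBigO_refl (fun x : ℝ => s / x) _).mul hR).trans_isLittleO hcube |>.congr' ?_
    EventuallyEq.rfl
  filter_upwards [self_mem_nhdsWithin] with x (hx : x ≠ 0)
  rw [rpowSecant, add_comm x 1]
  field_simp
  ring

section FirstOrder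

variable {l : Filter ℝ} {u v : ℝ → ℝ} {c d : ℝ}

lemma isBigO_sub_one_of_isLittleO (hu : (fun x => u x - 1 - c * x) =o[l] fun x => x) :
    (fun x => u x - 1) =O[l] fun x => x :=
  (hu.isBigO.add ((isBigO_refl _ l).const_mul_left c)).congr_left fun x => by ring

lemma tendsto_one_of_isLittleO (hl : l ≤ 𝓝 0)
    (hu : (fun x => u x - 1 - c * x) =o[l] fun x => x) : Tendsto u l (𝓝 1) := by
  have := (isBigO_sub_one_of_isLittleO hu).trans_tendsto (tendsto_id.mono_left hl)
  simpa using this.add_const 1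

lemma rpow_sub_one_sub_isLittleO (hl : l ≤ 𝓝 0) (q : ℝ)
    (hu : (fun x => u x - 1 - c * x) =o[l] fun x => x) :
    (fun x => u x ^ q - 1 - q * c * x) =o[l] fun x => x := by
  have hder : (fun t : ℝ => t ^ q - 1 - q * (t - 1)) =o[𝓝 1] fun t => t - 1 := by
    have := (Real.one_add_rpow_sub_linear_isLittleO q).comp_tendsto
      (tendsto_sub_nhds_zero_iff.mpr (tendsto_id (x := 𝓝 (1 : ℝ))))
    simpa [Function.comp_def] using this
  have hcomp := (hder.comp_tendsto (tendsto_one_of_isLittleO hl hu)).trans_isBigO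
    (isBigO_sub_one_of_isLittleO hu)
  refine (hcomp.add (hu.const_mul_left q)).congr_left fun x => ?_
  simp only [Function.comp_apply]
  ring

lemma mul_sub_one_sub_isLittleO (hl : l ≤ 𝓝 0)
    (hu : (fun x => u x - 1 - c * x) =o[l] fun x => x)
    (hv : (fun x => v x - 1 - d * x) =o[l] fun x => x) :
    (fun x => u x * v x - 1 - (c + d) * x) =o[l] fun x => x := by
  have hv1 : (fun x => v x - 1) =o[l] fun _ => (1 : ℝ) :=
    isLittleO_one_iff _ |>.mpr (by simpa using (tendsto_one_of_isLittleO hl hv).sub_const 1)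
  have hprod := (isBigO_sub_one_of_isLittleO hu).mul_isLittleO hv1
  simp only [mul_one] at hprod
  refine ((hu.add hv).add hprod).congr_left fun x => ?_
  ring

end FirstOrder

theorem gBeta_first_order_expansion_general (a b s : ℝ) (hs : 0 < s) :
    (fun x => gBeta a b s x - 1 - ((1 - 2 * a - b - s - b * s) / (2 * s)) * x)
      =o[nhdsWithin 0 (Set.Ioi 0)] (fun x => x) := by
  have hl : 𝓝[>] (0 : ℝ) ≤ 𝓝 0 := nhdsWithin_le_nhds
  have hsecant := (rpowSecant_sub_linear_isLittleO hs.ne').mono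
    (nhdsWithin_mono 0 fun x (hx : 0 < x) => hx.ne')
  have hpow := (Real.one_add_rpow_sub_linear_isLittleO ((1 - a - b) / s - 1)).mono hl
  simp only [add_comm (1 : ℝ)] at hpow
  have hprod := mul_sub_one_sub_isLittleO hl hpow (rpow_sub_one_sub_isLittleO hl (b - 1) hsecant)
  have hcoeff : (1 - a - b) / s - 1 + (b - 1) * ((1 / s - 1) / 2) =
      (1 - 2 * a - b - s - b * s) / (2 * s) := by
    field_simp
    ring
  rw [hcoeff] at hprod
  exact hprod

theorem gBeta_first_order_expansion (a b s : ℝ) (ha : 0 < a) (hb : 0 < b) (hs : 0 < s) :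
    (fun x => gBeta a b s x - 1 - ((1 - 2 * a - b - s - b * s) / (2 * s)) * x)
      =o[nhdsWithin 0 (Set.Ioi 0)] (fun x => x) :=
  gBeta_first_order_expansion_general a b s hs
end
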